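/- Let L : ℝ^{N+1} → ℝ be smooth and φ smooth. Define the Ostrogradsky momenta π_k = B_{k−1} for 1 ≤ k ≤ N (with B_j as in the higher-order integration-by-parts formula) and the Hamiltonian H = Σ_{k=1}^{N} π_k · φ^{(k)} − L(φ, …, φ^{(N)}). If φ solves the N-th order Euler–Lagrange equation, then dH/dt = −(∂L/∂t) evaluated along the solution; in particular, if L does not depend explicitly on t, then H is constant. -/

import Mathlib

open Finset

/-- The `N`-jet of a curve `φ`. -/
noncomputable def jet (N : ℕ) (φ : ℝ → ℝ) (t : ℝ) : Fin (N + 1) → ℝ :=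
  fun k => iteratedDeriv k.1 φ t

/-- `∂L/∂y_k` for a time-dependent Lagrangian, evaluated along `(t, jet of φ)`. -/
noncomputable def lagDerivT (N : ℕ) (L : ℝ × (Fin (N + 1) → ℝ) → ℝ) (φ : ℝ → ℝ)
    (k : ℕ) (t : ℝ) : ℝ :=
  fderiv ℝ L (t, jet N φ t) (0, Pi.single (Fin.ofNat (N + 1) k) 1)

/-- `∂L/∂t` (explicit time derivative), evaluated along `(t, jet of φ)`. -/
noncomputable def lagDerivTime (N : ℕ) (L : ℝ × (Fin (N + 1) → ℝ) → ℝ) (φ : ℝ → ℝ)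
    (t : ℝ) : ℝ :=
  fderiv ℝ L (t, jet N φ t) (1, 0)

/-- Ostrogradsky momentum `π_k = Σ_{m=k}^{N} (−1)^{m−k} d^{m−k}[∂L/∂y_m]`
(indexed via `m = k + i`). -/
noncomputable def ostroMomentum (N : ℕ) (L : ℝ × (Fin (N + 1) → ℝ) → ℝ) (φ : ℝ → ℝ)
    (k : ℕ) (t : ℝ) : ℝ :=
  ∑ i ∈ Finset.range (N + 1 - k), (-1 : ℝ) ^ i * iteratedDeriv i (lagDerivT N L φ (k + i)) t

/-- The Ostrogradsky Hamiltonian `H = Σ_{k=1}^{N} π_k φ^{(k)} − L(t, φ, …, φ^{(N)})`. -/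
noncomputable def ostroHamiltonian (N : ℕ) (L : ℝ × (Fin (N + 1) → ℝ) → ℝ) (φ : ℝ → ℝ)
    (t : ℝ) : ℝ :=
  (∑ k ∈ Finset.range N, ostroMomentum N L φ (k + 1) t * iteratedDeriv (k + 1) φ t) -
    L (t, jet N φ t)

/-- The `N`-th order Euler–Lagrange expression for a time-dependent Lagrangian. -/
noncomputable def eulerLagrangeT (N : ℕ) (L : ℝ × (Fin (N + 1) → ℝ) → ℝ) (φ : ℝ → ℝ)
    (t : ℝ) : ℝ :=
  ∑ k ∈ Finset.range (N + 1), (-1 : ℝ) ^ k * iteratedDeriv k (lagDerivT N L φ k) t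

open scoped ContDiff

theorem ostrogradsky_hamiltonian_evolution (N : ℕ)
    (L : ℝ × (Fin (N + 1) → ℝ) → ℝ) (hL : ContDiff ℝ (⊤ : ℕ∞) L)
    (φ : ℝ → ℝ) (hφ : ContDiff ℝ (⊤ : ℕ∞) φ)
    (hEL : ∀ t : ℝ, eulerLagrangeT N L φ t = 0) :
    (∀ t : ℝ, deriv (ostroHamiltonian N L φ) t = -lagDerivTime N L φ t) ∧
      ((∀ p : ℝ × (Fin (N + 1) → ℝ), fderiv ℝ L p (1, 0) = 0) →
        ∀ t₁ t₂ : ℝ, ostroHamiltonian N L φ t₁ = ostroHamiltonian N L φ t₂) := by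
  have h1inf : (1 : WithTop ℕ∞) ≤ ∞ := by exact_mod_cast (le_top : (1 : ℕ∞) ≤ ⊤)
  have hL' : ContDiff ℝ ∞ L := hL.of_le (by simp)
  have hφ' : ContDiff ℝ ∞ φ := hφ.of_le (by simp)
  -- smoothness of iterated derivatives
  have hsmooth_iter : ∀ (f : ℝ → ℝ), ContDiff ℝ ∞ f → ∀ n : ℕ,
      ContDiff ℝ ∞ (iteratedDeriv n f) := by
    intro f hf n
    rw [iteratedDeriv_eq_iterate]
    exact hf.iterate_deriv n
  -- HasDerivAt for iterated derivatives of smooth functions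
  have hder_iter : ∀ (f : ℝ → ℝ), ContDiff ℝ ∞ f → ∀ (n : ℕ) (t : ℝ),
      HasDerivAt (iteratedDeriv n f) (iteratedDeriv (n + 1) f t) t := by
    intro f hf n t
    rw [iteratedDeriv_succ]
    exact (((hsmooth_iter f hf n).differentiable (zero_lt_one.trans_le h1inf).ne') t).hasDerivAt
  -- smoothness of the jet
  have hjet : ContDiff ℝ ∞ (fun t : ℝ => jet N φ t) := by
    apply contDiff_pi.2
    intro k
    exact hsmooth_iter φ hφ' k.1
  -- smoothness of lagDerivT
  have hA : ∀ m : ℕ, ContDiff ℝ ∞ (lagDerivT N L φ m) := by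
    intro m
    have hcurve : ContDiff ℝ ∞ (fun t : ℝ => ((t, jet N φ t) : ℝ × (Fin (N + 1) → ℝ))) :=
      contDiff_id.prodMk hjet
    have hfd : ContDiff ℝ ∞ (fun t : ℝ => fderiv ℝ L (t, jet N φ t)) :=
      (hL'.fderiv_right (le_refl _)).comp hcurve
    exact hfd.clm_apply contDiff_const
  -- derivative of the momenta: (π_{k+1})' = A_k - π_k
  have hder_mom : ∀ (k : ℕ), k ≤ N → ∀ t : ℝ,
      HasDerivAt (ostroMomentum N L φ (k + 1))
        (lagDerivT N L φ k t - ostroMomentum N L φ k t) t := by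
    intro k hk t
    have h1 : HasDerivAt (ostroMomentum N L φ (k + 1))
        (∑ j ∈ Finset.range (N - k),
          (-1 : ℝ) ^ j * iteratedDeriv (j + 1) (lagDerivT N L φ (k + 1 + j)) t) t := by
      have he : ostroMomentum N L φ (k + 1) = fun s =>
          ∑ j ∈ Finset.range (N - k),
            (-1 : ℝ) ^ j * iteratedDeriv j (lagDerivT N L φ (k + 1 + j)) s := by
        funext s
        unfold ostroMomentum
        rw [show N + 1 - (k + 1) = N - k from by omega]
      rw [he]
      exact HasDerivAt.fun_sum fun j _ =>
        (hder_iter _ (hA (k + 1 + j)) j t).const_mul _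
    have hval : lagDerivT N L φ k t - ostroMomentum N L φ k t =
        ∑ j ∈ Finset.range (N - k),
          (-1 : ℝ) ^ j * iteratedDeriv (j + 1) (lagDerivT N L φ (k + 1 + j)) t := by
      unfold ostroMomentum
      rw [show N + 1 - k = (N - k) + 1 from by omega, Finset.sum_range_succ']
      simp only [pow_zero, one_mul, iteratedDeriv_zero, Nat.add_zero]
      rw [show ∀ S : ℝ, lagDerivT N L φ k t - (S + lagDerivT N L φ k t) = -S from
        fun S => by ring]
      rw [← Finset.sum_neg_distrib]
      apply Finset.sum_congr rfl
      intro i _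
      rw [show k + (i + 1) = k + 1 + i from by omega]
      ring
    rw [hval]
    exact h1
  -- π₀ = Euler-Lagrange = 0
  have hpi0 : ∀ t : ℝ, ostroMomentum N L φ 0 t = 0 := by
    intro t
    have : ostroMomentum N L φ 0 t = eulerLagrangeT N L φ t := by
      unfold ostroMomentum eulerLagrangeT
      simp
    rw [this, hEL t]
  -- π_N = A_N
  have hpiN : ∀ t : ℝ, ostroMomentum N L φ N t = lagDerivT N L φ N t := by
    intro t
    unfold ostroMomentum
    rw [show N + 1 - N = 1 from by omega, Finset.sum_range_one]
    simp
  -- derivative of t ↦ L (t, jet t)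
  have hder_L : ∀ t : ℝ, HasDerivAt (fun s : ℝ => L (s, jet N φ s))
      (lagDerivTime N L φ t +
        ∑ m ∈ Finset.range (N + 1), lagDerivT N L φ m t * iteratedDeriv (m + 1) φ t) t := by
    intro t
    have hjet' : HasDerivAt (fun s : ℝ => jet N φ s)
        (fun k : Fin (N + 1) => iteratedDeriv (k.1 + 1) φ t) t := by
      apply hasDerivAt_pi.2
      intro k
      exact hder_iter φ hφ' k.1 t
    have hcurve : HasDerivAt (fun s : ℝ => ((s, jet N φ s) : ℝ × (Fin (N + 1) → ℝ)))
        ((1 : ℝ), fun k : Fin (N + 1) => iteratedDeriv (k.1 + 1) φ t) t :=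
      (hasDerivAt_id t).prodMk hjet'
    have hLd : HasFDerivAt L (fderiv ℝ L (t, jet N φ t)) (t, jet N φ t) :=
      ((hL'.differentiable (zero_lt_one.trans_le h1inf).ne') _).hasFDerivAt
    have hcomp := hLd.comp_hasDerivAt t hcurve
    have hval : fderiv ℝ L (t, jet N φ t)
        ((1 : ℝ), fun k : Fin (N + 1) => iteratedDeriv (k.1 + 1) φ t) =
        lagDerivTime N L φ t +
          ∑ m ∈ Finset.range (N + 1), lagDerivT N L φ m t * iteratedDeriv (m + 1) φ t := by
      have hsplit : ((1 : ℝ), fun k : Fin (N + 1) => iteratedDeriv (k.1 + 1) φ t) =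
          ((1 : ℝ), (0 : Fin (N + 1) → ℝ)) +
            ∑ k : Fin (N + 1), (iteratedDeriv (k.1 + 1) φ t) •
              (((0 : ℝ), Pi.single k (1 : ℝ)) : ℝ × (Fin (N + 1) → ℝ)) := by
        rw [Prod.ext_iff]
        constructor
        · simp [Prod.fst_sum]
        · simp only [Prod.snd_add, Prod.snd_sum, Prod.smul_snd, Prod.fst_add]
          funext j
          simp [Pi.single_apply, Finset.sum_apply]
      rw [hsplit, map_add, map_sum]
      congr 1
      rw [show ∑ m ∈ Finset.range (N + 1),
            lagDerivT N L φ m t * iteratedDeriv (m + 1) φ t =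
          ∑ k : Fin (N + 1), lagDerivT N L φ k.1 t * iteratedDeriv (k.1 + 1) φ t from
        (Fin.sum_univ_eq_sum_range
          (fun m => lagDerivT N L φ m t * iteratedDeriv (m + 1) φ t) (N + 1)).symm]
      apply Finset.sum_congr rfl
      intro k _
      rw [map_smul]
      unfold lagDerivT
      rw [Fin.ofNat_val_eq_self]
      simp [mul_comm]
    rw [← hval]
    exact hcomp
  -- derivative of the Hamiltonian
  have hHder : ∀ t : ℝ, HasDerivAt (ostroHamiltonian N L φ) (-lagDerivTime N L φ t) t := by
    intro t
    have hsum : HasDerivAt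
        (fun s : ℝ => ∑ k ∈ Finset.range N,
          ostroMomentum N L φ (k + 1) s * iteratedDeriv (k + 1) φ s)
        (∑ k ∈ Finset.range N,
          ((lagDerivT N L φ k t - ostroMomentum N L φ k t) * iteratedDeriv (k + 1) φ t +
            ostroMomentum N L φ (k + 1) t * iteratedDeriv (k + 1 + 1) φ t)) t := by
      apply HasDerivAt.fun_sum
      intro k hk
      have hkN : k ≤ N := by
        have := Finset.mem_range.1 hk; omega
      exact (hder_mom k hkN t).mul (hder_iter φ hφ' (k + 1) t)
    have htotal := hsum.sub (hder_L t)
    have hval : ∑ k ∈ Finset.range N,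
          ((lagDerivT N L φ k t - ostroMomentum N L φ k t) * iteratedDeriv (k + 1) φ t +
            ostroMomentum N L φ (k + 1) t * iteratedDeriv (k + 1 + 1) φ t) -
        (lagDerivTime N L φ t +
          ∑ m ∈ Finset.range (N + 1), lagDerivT N L φ m t * iteratedDeriv (m + 1) φ t) =
        -lagDerivTime N L φ t := by
      have hmain : ∑ k ∈ Finset.range N,
          ((lagDerivT N L φ k t - ostroMomentum N L φ k t) * iteratedDeriv (k + 1) φ t +
            ostroMomentum N L φ (k + 1) t * iteratedDeriv (k + 1 + 1) φ t) =
          ∑ m ∈ Finset.range (N + 1), lagDerivT N L φ m t * iteratedDeriv (m + 1) φ t := by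
        have hsplit : ∀ k ∈ Finset.range N,
            (lagDerivT N L φ k t - ostroMomentum N L φ k t) * iteratedDeriv (k + 1) φ t +
              ostroMomentum N L φ (k + 1) t * iteratedDeriv (k + 1 + 1) φ t =
            lagDerivT N L φ k t * iteratedDeriv (k + 1) φ t +
              (ostroMomentum N L φ (k + 1) t * iteratedDeriv ((k + 1) + 1) φ t -
                ostroMomentum N L φ k t * iteratedDeriv (k + 1) φ t) := by
          intro k _; ring
        rw [Finset.sum_congr rfl hsplit, Finset.sum_add_distrib,
          Finset.sum_range_sub (fun k => ostroMomentum N L φ k t * iteratedDeriv (k + 1) φ t) N,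
          hpi0 t, hpiN t, Finset.sum_range_succ]
        ring
      rw [hmain]; ring
    rw [← hval]
    unfold ostroHamiltonian
    exact htotal
  constructor
  · intro t
    exact (hHder t).deriv
  · intro h0 t₁ t₂
    apply is_const_of_deriv_eq_zero
    · exact fun t => (hHder t).differentiableAt
    · intro t
      rw [(hHder t).deriv]
      unfold lagDerivTime
      rw [h0]
      ring
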